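/- arXiv:2109.02249 — 3 statements merged into one kernel-verified Lean document; each statement's English description precedes it below -/
import Mathlib

section
/- Suppose that for all x in an interval [a, X] one has |θ(x) − x| ≤ (√x/(8π))·log x·(log x − 2), where a ≥ 5000, and set C₀ = |π(a) − li(a) − (θ(a) − a)/log a|. Then for all x in [a, X], |π(x) − li(x)| ≤ (√x/(8π))(log x − 2) + √x/(4π) − √a/(4π) + C₀. -/
open scoped Classical

/-- The logarithmic integral `li(x)` as a principal value. -/
noncomputable def li (x : ℝ) : ℝ :=
  Filter.limUnder (nhdsWithin (0 : ℝ) (Set.Ioi 0)) fun ε =>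
    (∫ t in (0 : ℝ)..(1 - ε), 1 / Real.log t) + ∫ t in (1 + ε : ℝ)..x, 1 / Real.log t

/-- Normalised prime counting function: last term halved when `x` is prime. -/
noncomputable def primePi (x : ℝ) : ℝ :=
  ∑ p ∈ Finset.filter Nat.Prime (Finset.range (⌊x⌋₊ + 1)),
    (if (p : ℝ) = x then (1 : ℝ) / 2 else if (p : ℝ) ≤ x then 1 else 0)

/-- Normalised Chebyshev theta function. -/
noncomputable def chebTheta (x : ℝ) : ℝ :=
  ∑ p ∈ Finset.filter Nat.Prime (Finset.range (⌊x⌋₊ + 1)),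
    (if (p : ℝ) = x then Real.log p / 2 else if (p : ℝ) ≤ x then Real.log p else 0)

/-- Normalised Chebyshev psi function. -/
noncomputable def chebPsi (x : ℝ) : ℝ :=
  ∑ n ∈ Finset.range (⌊x⌋₊ + 1),
    (if (n : ℝ) = x then ArithmeticFunction.vonMangoldt n / 2
     else if (n : ℝ) ≤ x then ArithmeticFunction.vonMangoldt n else 0)

/-- Normalised Riemann prime counting function `Π(x) = Σ*_{p^m ≤ x} 1/m`. -/
noncomputable def riemannPi (x : ℝ) : ℝ :=
  ∑ n ∈ Finset.range (⌊x⌋₊ + 1),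
    (if (n : ℝ) = x then ArithmeticFunction.vonMangoldt n / Real.log n / 2
     else if (n : ℝ) ≤ x then ArithmeticFunction.vonMangoldt n / Real.log n else 0)




/-!
Partial summation. Abel summation (`Chebyshev.primeCounting_eq_theta_div_log_add_integral`) gives
`π(x) = θ(x)/log x + ∫₂ˣ θ(t)/(t log² t) dt`, and integrating `1/log t` by parts gives
`li x - li a = x/log x - a/log a + ∫ₐˣ dt/log² t`, so `π(x) - li(x) - (θ(x) - x)/log x` changes
between `a` and `x` by `∫ₐˣ (θ(t) - t)/(t log² t) dt`. The normalised functions have the same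
combination `π - θ/log` and agree with the step functions off the integers. The hypothesis bounds
the boundary term at `x` by `√x (log x - 2)/(8π)` and the integrand by `1/(8π√t)`, whose integral
is `(√x - √a)/(4π)`.
-/

open Real MeasureTheory Filter Topology Set

theorem continuousOn_one_div_log : ContinuousOn (fun t : ℝ => 1 / log t) {1, -1}ᶜ := by
  intro t ht
  refine ContinuousAt.continuousWithinAt ?_
  obtain rfl | h0 := eq_or_ne t 0
  · rw [← continuousWithinAt_compl_self, ContinuousWithinAt, log_zero, div_zero]
    exact (tendsto_log_nhdsNE_zero.inv_tendsto_atBot).congr fun t => (one_div _).symm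
  · simp only [mem_compl_iff, mem_insert_iff, mem_singleton_iff, not_or] at ht
    exact continuousAt_const.div (continuousAt_log h0) (log_ne_zero.mpr (by tauto))

theorem intervalIntegrable_one_div_log_of_mem_Ioo {b c : ℝ} (hb : b ∈ Ioo (-1) 1)
    (hc : c ∈ Ioo (-1) 1) : IntervalIntegrable (fun t => 1 / log t) volume b c :=
  (continuousOn_one_div_log.mono <| (ordConnected_Ioo.uIcc_subset hb hc).trans fun t ht => by
    simp only [mem_compl_iff, mem_insert_iff, mem_singleton_iff]; grind).intervalIntegrable

theorem intervalIntegrable_one_div_log_of_one_lt {b c : ℝ} (hb : 1 < b) (hc : 1 < c) :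
    IntervalIntegrable (fun t => 1 / log t) volume b c :=
  (continuousOn_one_div_log.mono <| (ordConnected_Ioi.uIcc_subset hb hc).trans fun t ht => by
    simp only [mem_compl_iff, mem_insert_iff, mem_singleton_iff]; grind).intervalIntegrable

noncomputable def symmOneDivLog (s : ℝ) : ℝ := 1 / log (1 - s) + 1 / log (1 + s)

theorem abs_symmOneDivLog_le {s : ℝ} (hs0 : 0 ≤ s) (hs : s ≤ 1 / 2) :
    |symmOneDivLog s| ≤ 2 := by
  obtain rfl | hs0 := hs0.eq_or_lt
  · simp [symmOneDivLog]
  -- `symmOneDivLog s = (v - u) / (u v)`, where `v - u = -log (1 - s²) = O(s²)`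
  -- and `u v ≥ s² / (1 + s)`
  set u := log (1 + s)
  set v := -log (1 - s)
  have hu : s / (1 + s) ≤ u := by
    have := one_sub_inv_le_log_of_pos (x := 1 + s) (by linarith)
    rwa [show 1 - (1 + s)⁻¹ = s / (1 + s) by field_simp; ring] at this
  have hv : s ≤ v := by linarith [log_le_sub_one_of_pos (x := 1 - s) (by linarith)]
  have hlog : log (1 - s ^ 2) = u - v := by
    rw [show 1 - s ^ 2 = (1 - s) * (1 + s) by ring, log_mul (by linarith) (by linarith)]; ring
  have hs2 : 0 < 1 - s ^ 2 := by nlinarith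
  have hvu : v - u ≤ s ^ 2 / (1 - s ^ 2) := by
    have := one_sub_inv_le_log_of_pos hs2
    rw [show 1 - (1 - s ^ 2)⁻¹ = -(s ^ 2 / (1 - s ^ 2)) by field_simp; ring] at this
    linarith
  have huv : 0 ≤ v - u := by linarith [log_nonpos (x := 1 - s ^ 2) hs2.le (by nlinarith)]
  have hu0 : 0 < u := (div_pos hs0 (by linarith)).trans_le hu
  have huv_pos : 0 < u * v := mul_pos hu0 (hs0.trans_le hv)
  have heq : symmOneDivLog s = (v - u) / (u * v) := by
    simp only [symmOneDivLog, u, v] at huv_pos ⊢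
    have hlog₁ : log (1 - s) ≠ 0 := by rintro h; simp [h] at huv_pos
    have hlog₂ : log (1 + s) ≠ 0 := hu0.ne'
    field_simp
    ring
  rw [heq, abs_of_nonneg (div_nonneg huv huv_pos.le), div_le_iff₀ huv_pos]
  calc v - u ≤ s ^ 2 / (1 - s ^ 2) := hvu
    _ ≤ 2 * (s / (1 + s) * s) := by
      rw [div_le_iff₀ hs2]
      field_simp
      nlinarith
    _ ≤ 2 * (u * v) := by gcongr

theorem integrableOn_symmOneDivLog : IntegrableOn symmOneDivLog (Icc 0 (1 / 2)) := by
  refine Measure.integrableOn_of_bounded (M := 2) (by simp)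
    (by unfold symmOneDivLog; fun_prop) ?_
  filter_upwards [ae_restrict_mem measurableSet_Icc] with s hs
  exact abs_symmOneDivLog_le hs.1 hs.2

open intervalIntegral in
/-- Folding `(1 - ε, 1 + ε)` around `1` turns the truncated integral into an integral of the
bounded function `symmOneDivLog`. -/
theorem li_truncation_eq {b ε : ℝ} (hb : 1 < b) (hε : 0 < ε) (hε' : ε ≤ 1 / 2) :
    (∫ t in (0 : ℝ)..(1 - ε), 1 / log t) + ∫ t in (1 + ε)..b, 1 / log t =
      (∫ t in (0 : ℝ)..(1 / 2), 1 / log t) + (∫ t in (3 / 2 : ℝ)..b, 1 / log t) +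
        ∫ s in ε..(1 / 2), symmOneDivLog s := by
  have hleft : IntervalIntegrable (fun t => 1 / log t) volume (1 / 2) (1 - ε) :=
    intervalIntegrable_one_div_log_of_mem_Ioo (by norm_num) ⟨by linarith, by linarith⟩
  have hright : IntervalIntegrable (fun t => 1 / log t) volume (1 + ε) (3 / 2) :=
    intervalIntegrable_one_div_log_of_one_lt (by linarith) (by norm_num)
  have hfold : ∫ s in ε..(1 / 2), symmOneDivLog s =
      (∫ t in (1 / 2 : ℝ)..(1 - ε), 1 / log t) + ∫ t in (1 + ε)..(3 / 2), 1 / log t := by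
    unfold symmOneDivLog
    rw [intervalIntegral.integral_add (f := fun s => 1 / log (1 - s))
        (g := fun s => 1 / log (1 + s)),
      integral_comp_sub_left (fun t => 1 / log t), integral_comp_add_left (fun t => 1 / log t)]
    · norm_num
    · convert (hleft.comp_sub_left 1).symm using 1 <;> norm_num
    · convert hright.comp_add_left 1 using 1 <;> norm_num
  rw [hfold, ← integral_add_adjacent_intervals (intervalIntegrable_one_div_log_of_mem_Ioo
      (by norm_num) (by norm_num)) hleft,
    ← integral_add_adjacent_intervals hright (intervalIntegrable_one_div_log_of_one_lt
      (by norm_num) hb)]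
  ring

theorem tendsto_li_truncation {b : ℝ} (hb : 1 < b) :
    Tendsto (fun ε => (∫ t in (0 : ℝ)..(1 - ε), 1 / log t) + ∫ t in (1 + ε)..b, 1 / log t)
      (𝓝[>] 0)
      (𝓝 ((∫ t in (0 : ℝ)..(1 / 2), 1 / log t) + (∫ t in (3 / 2 : ℝ)..b, 1 / log t) +
        ∫ s in (0 : ℝ)..(1 / 2), symmOneDivLog s)) := by
  have hprim : ContinuousOn (fun ε => ∫ s in ε..(1 / 2), symmOneDivLog s) (Icc 0 (1 / 2)) := by
    simpa only [uIcc_of_le (by norm_num : (0 : ℝ) ≤ 1 / 2)] using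
      intervalIntegral.continuousOn_primitive_interval_left (a := 0) (b := 1 / 2)
        (by simpa only [uIcc_of_le (by norm_num : (0 : ℝ) ≤ 1 / 2)] using
          integrableOn_symmOneDivLog)
  have hlim : Tendsto (fun ε => ∫ s in ε..(1 / 2), symmOneDivLog s) (𝓝[>] 0)
      (𝓝 (∫ s in (0 : ℝ)..(1 / 2), symmOneDivLog s)) := by
    have := (hprim 0 ⟨le_rfl, by norm_num⟩).mono_left (nhdsWithin_mono _ Ioc_subset_Icc_self)
    rwa [nhdsWithin_Ioc_eq_nhdsGT (by norm_num)] at this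
  refine (tendsto_const_nhds.add hlim).congr' ?_
  filter_upwards [Ioc_mem_nhdsGT (by norm_num : (0 : ℝ) < 1 / 2)] with ε hε
  exact (li_truncation_eq hb hε.1 hε.2).symm

theorem li_sub_li {b c : ℝ} (hb : 1 < b) (hc : 1 < c) :
    li c - li b = ∫ t in b..c, 1 / log t := by
  rw [li, li, (tendsto_li_truncation hb).limUnder_eq, (tendsto_li_truncation hc).limUnder_eq,
    ← intervalIntegral.integral_interval_sub_left
      (intervalIntegrable_one_div_log_of_one_lt (b := 3 / 2) (by norm_num) hc)
      (intervalIntegrable_one_div_log_of_one_lt (by norm_num) hb)]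
  ring

theorem integral_one_div_log {b c : ℝ} (hb : 1 < b) (hc : 1 < c) :
    ∫ t in b..c, 1 / log t = c / log c - b / log b + ∫ t in b..c, 1 / log t ^ 2 := by
  have hderiv : ∀ t ∈ uIcc b c, HasDerivAt (fun t => t / log t) (1 / log t - 1 / log t ^ 2) t := by
    intro t ht
    have ht1 : 1 < t := lt_of_lt_of_le (lt_min hb hc) ht.1
    have hlog : log t ≠ 0 := (log_pos ht1).ne'
    refine ((hasDerivAt_id' t).div (hasDerivAt_log (by linarith)) hlog).congr_deriv ?_
    field_simp
  have hsq := Chebyshev.intervalIntegrable_one_div_log_sq hb hc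
  rw [← intervalIntegral.integral_eq_sub_of_hasDerivAt hderiv
    ((intervalIntegrable_one_div_log_of_one_lt hb hc).sub hsq),
    intervalIntegral.integral_sub (intervalIntegrable_one_div_log_of_one_lt hb hc) hsq]
  ring

open scoped Chebyshev

theorem intervalIntegrable_theta_div_mul_log_sq {b c : ℝ} (hb : 2 ≤ b) (hc : 2 ≤ c) :
    IntervalIntegrable (fun t => θ t / (t * log t ^ 2)) volume b c := by
  have h2 : ∀ {x : ℝ}, 2 ≤ x → IntervalIntegrable (fun t => θ t / (t * log t ^ 2)) volume 2 x :=
    fun hx => (intervalIntegrable_iff_integrableOn_Icc_of_le hx).2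
      (Chebyshev.integrableOn_theta_div_id_mul_log_sq _)
  exact (h2 hb).symm.trans (h2 hc)

theorem primeCounting_sub_li_eq {a x : ℝ} (ha : 2 ≤ a) (hx : 2 ≤ x) :
    (Nat.primeCounting ⌊x⌋₊ : ℝ) - li x - (θ x - x) / log x =
      Nat.primeCounting ⌊a⌋₊ - li a - (θ a - a) / log a +
        ∫ t in a..x, (θ t - t) / (t * log t ^ 2) := by
  have hsplit : ∫ t in a..x, (θ t - t) / (t * log t ^ 2) =
      (∫ t in a..x, θ t / (t * log t ^ 2)) - ∫ t in a..x, 1 / log t ^ 2 := by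
    rw [← intervalIntegral.integral_sub (intervalIntegrable_theta_div_mul_log_sq ha hx)
      (Chebyshev.intervalIntegrable_one_div_log_sq (by linarith) (by linarith))]
    refine intervalIntegral.integral_congr fun t ht => ?_
    have ht0 : t ≠ 0 := by linarith [ht.1, le_min ha hx]
    rw [sub_div, div_mul_cancel_left₀ ht0, one_div]
  have hθ := intervalIntegral.integral_interval_sub_left
    (intervalIntegrable_theta_div_mul_log_sq le_rfl hx)
    (intervalIntegrable_theta_div_mul_log_sq le_rfl ha)
  have hli := li_sub_li (show 1 < a by linarith) (show 1 < x by linarith)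
  rw [integral_one_div_log (by linarith) (by linarith)] at hli
  rw [Chebyshev.primeCounting_eq_theta_div_log_add_integral hx,
    Chebyshev.primeCounting_eq_theta_div_log_add_integral ha, hsplit, ← hθ, sub_div, sub_div]
  linarith

theorem theta_eq_sum_filter_range (x : ℝ) :
    θ x = ∑ p ∈ Finset.filter Nat.Prime (Finset.range (⌊x⌋₊ + 1)), log p := by
  rw [Chebyshev.theta_eq_sum_Icc, Nat.range_succ_eq_Icc_zero]

theorem cast_le_of_mem_filter_prime_range {x : ℝ} {p : ℕ}
    (hp : p ∈ Finset.filter Nat.Prime (Finset.range (⌊x⌋₊ + 1))) : (p : ℝ) ≤ x := by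
  rw [Finset.mem_filter, Finset.mem_range, Nat.lt_succ_iff] at hp
  exact (Nat.le_floor_iff' hp.2.ne_zero).1 hp.1

theorem chebTheta_eq_theta {x : ℝ} (hx : ∀ n : ℕ, (n : ℝ) ≠ x) : chebTheta x = θ x := by
  rw [chebTheta, theta_eq_sum_filter_range]
  exact Finset.sum_congr rfl fun p hp => by
    rw [if_neg (hx p), if_pos (cast_le_of_mem_filter_prime_range hp)]

/-- At a prime `x` both normalisations take half a jump, and these halves cancel. -/
theorem primePi_sub_chebTheta_div_log (x : ℝ) :
    primePi x - chebTheta x / log x = Nat.primeCounting ⌊x⌋₊ - θ x / log x := by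
  rw [Nat.primeCounting, Nat.primeCounting', Nat.count_eq_card_filter_range,
    Finset.card_eq_sum_ones, theta_eq_sum_filter_range, primePi, chebTheta]
  simp only [Nat.cast_sum, Nat.cast_one, Finset.sum_div, ← Finset.sum_sub_distrib]
  refine Finset.sum_congr rfl fun p hp => ?_
  by_cases hpx : (p : ℝ) = x
  · have hlog : log x ≠ 0 := by
      rw [← hpx]
      exact log_ne_zero_of_pos_of_ne_one (by exact_mod_cast (Finset.mem_filter.1 hp).2.pos)
        (by exact_mod_cast (Finset.mem_filter.1 hp).2.ne_one)
    rw [if_pos hpx, if_pos hpx, hpx]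
    field_simp
    ring
  · rw [if_neg hpx, if_neg hpx, if_pos (cast_le_of_mem_filter_prime_range hp),
      if_pos (cast_le_of_mem_filter_prime_range hp)]

theorem abs_div_mul_log_sq_le {E K t : ℝ} (hK : 0 < K) (ht : 1 < t)
    (hE : |E| ≤ √t / K * log t * (log t - 2)) : |E / (t * log t ^ 2)| ≤ K⁻¹ / √t := by
  have hlog : 0 < log t := log_pos ht
  have hsqrt : 0 < √t := sqrt_pos.2 (by linarith)
  have hden : 0 < t * log t ^ 2 := by positivity
  rw [abs_div, abs_of_pos hden, div_le_div_iff₀ hden hsqrt]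
  calc |E| * √t ≤ √t / K * log t * (log t - 2) * √t := by gcongr
    _ = K⁻¹ * (√t * √t) * (log t * (log t - 2)) := by ring
    _ ≤ K⁻¹ * (√t * √t) * log t ^ 2 := by gcongr; nlinarith
    _ = K⁻¹ * (t * log t ^ 2) := by rw [mul_self_sqrt (by linarith)]; ring

theorem abs_integral_le_of_abs_le_div_sqrt {f : ℝ → ℝ} {a x C : ℝ} (ha : 0 < a) (hax : a ≤ x)
    (hf : ∀ᵐ t, t ∈ Ioc a x → |f t| ≤ C / √t) :
    |∫ t in a..x, f t| ≤ 2 * C * (√x - √a) := by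
  have hderiv : ∀ t ∈ uIcc a x, HasDerivAt (fun t => 2 * C * √t) (C / √t) t := by
    intro t ht
    have ht0 : t ≠ 0 := by rw [uIcc_of_le hax] at ht; linarith [ht.1]
    refine ((hasDerivAt_sqrt ht0).const_mul (2 * C)).congr_deriv ?_
    field_simp
  have hint : IntervalIntegrable (fun t => C / √t) volume a x := by
    refine ContinuousOn.intervalIntegrable fun t ht => ?_
    rw [uIcc_of_le hax] at ht
    exact (continuousAt_const.div continuous_sqrt.continuousAt
      (sqrt_pos.2 (by linarith [ht.1])).ne').continuousWithinAt
  have := intervalIntegral.norm_integral_le_of_norm_le (f := f) hax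
    (by simpa only [Real.norm_eq_abs] using hf) hint
  rw [intervalIntegral.integral_eq_sub_of_hasDerivAt hderiv hint] at this
  simpa only [Real.norm_eq_abs, mul_sub] using this

/-- If `|θ(t) − t| ≤ (√t/(8π)) log t (log t − 2)` on `[a, X]` with `a ≥ 5000`, then on
`[a, X]`, `|π(x) − li(x)| ≤ (√x/(8π))(log x − 2) + √x/(4π) − √a/(4π) + C₀`, where
`C₀ = |π(a) − li(a) − (θ(a) − a)/log a|`. -/
theorem primePi_sub_li_bound (a X : ℝ) (ha : 5000 ≤ a)
    (hθ : ∀ t ∈ Set.Icc a X,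
      |chebTheta t - t| ≤ Real.sqrt t / (8 * Real.pi) * Real.log t * (Real.log t - 2)) :
    ∀ x ∈ Set.Icc a X,
      |primePi x - li x| ≤
        Real.sqrt x / (8 * Real.pi) * (Real.log x - 2) + Real.sqrt x / (4 * Real.pi) -
          Real.sqrt a / (4 * Real.pi) +
          |primePi a - li a - (chebTheta a - a) / Real.log a| := by
  rintro x ⟨hax, hxX⟩
  have ha2 : 2 ≤ a := by linarith
  have hx1 : 1 < x := by linarith
  set I := ∫ t in a..x, (θ t - t) / (t * log t ^ 2)
  have hsplit : primePi x - li x =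
      (primePi a - li a - (chebTheta a - a) / log a) + (chebTheta x - x) / log x + I := by
    have hπx := primePi_sub_chebTheta_div_log x
    have hπa := primePi_sub_chebTheta_div_log a
    have hpartial := primeCounting_sub_li_eq ha2 (by linarith : 2 ≤ x)
    rw [sub_div, sub_div] at hpartial ⊢
    linarith
  have hterm : |(chebTheta x - x) / log x| ≤ √x / (8 * π) * (log x - 2) := by
    have hlog : 0 < log x := log_pos hx1
    rw [abs_div, abs_of_pos hlog, div_le_iff₀ hlog]
    linarith [hθ x ⟨hax, hxX⟩]
  have hI : |I| ≤ √x / (4 * π) - √a / (4 * π) := by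
    have hbound : ∀ᵐ t, t ∈ Ioc a x → |(θ t - t) / (t * log t ^ 2)| ≤ (8 * π)⁻¹ / √t := by
      filter_upwards [(countable_range (Nat.cast : ℕ → ℝ)).ae_notMem volume] with t hnat ht
      rw [← chebTheta_eq_theta fun n hn => hnat ⟨n, hn⟩]
      exact abs_div_mul_log_sq_le (by positivity) (by linarith [ht.1])
        (hθ t ⟨ht.1.le, ht.2.trans hxX⟩)
    calc |I| ≤ 2 * (8 * π)⁻¹ * (√x - √a) :=
          abs_integral_le_of_abs_le_div_sqrt (by linarith) hax hbound
      _ = √x / (4 * π) - √a / (4 * π) := by field_simp; ring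
  rw [hsplit]
  linarith [abs_add_three (primePi a - li a - (chebTheta a - a) / log a)
    ((chebTheta x - x) / log x) I]
end

section
/- Let a > 0 and suppose |π(y) − li(y)| < a·√y·log y for all y in [e^{z−1}, e^z], where z > 1. If (e^{z+1}/z)·li(e^{z−1}) − (a(z−1)/z)·e^{(3z+1)/2} − (li(e^z) + a·z·e^{z/2})² > 0, then π(e^z)² < (e^{z+1}/z)·π(e^{z−1}), i.e., Ramanujan's inequality holds at x = e^z. -/
open scoped Classical

/-!
Evaluate the hypothesis at both ends of `[e^{z−1}, e^z]`, where `√y · log y` is `t e^{t/2}` for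
`y = e^t`: it bounds `π(e^z)` above by `B = li(e^z) + a z e^{z/2}` and `π(e^{z−1})` below by
`li(e^{z−1}) − a(z−1)e^{(z−1)/2}`. Multiplying the lower bound by `e^{z+1}/z` turns the error
term into `(a(z−1)/z) e^{(3z+1)/2}`, so the positivity hypothesis says exactly that `B²` lies
below `(e^{z+1}/z) π(e^{z−1})`; and `π(e^z)² < B²` since `0 ≤ π(e^z) < B`.
-/

open Real

lemma primePi_nonneg (x : ℝ) : 0 ≤ primePi x :=
  Finset.sum_nonneg fun _ _ => by split_ifs <;> norm_num

lemma sqrt_exp_mul_log_exp (t : ℝ) : √(exp t) * log (exp t) = t * exp (t / 2) := by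
  rw [← exp_half, log_exp, mul_comm]

lemma abs_primePi_exp_sub_li_lt {a t : ℝ}
    (h : |primePi (exp t) - li (exp t)| < a * √(exp t) * log (exp t)) :
    |primePi (exp t) - li (exp t)| < a * (t * exp (t / 2)) := by
  rwa [mul_assoc, sqrt_exp_mul_log_exp] at h

lemma sq_lt_mul_of_lt_of_sub_lt {p q B L E c : ℝ} (hp : 0 ≤ p) (hpB : p < B)
    (hq : L - E < q) (hc : 0 < c) (hB : B ^ 2 < c * (L - E)) : p ^ 2 < c * q :=
  calc p ^ 2 < B ^ 2 := by gcongr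
    _ < c * (L - E) := hB
    _ < c * q := by gcongr

lemma exp_div_mul_exp_half (z : ℝ) :
    exp (z + 1) / z * exp ((z - 1) / 2) = exp ((3 * z + 1) / 2) / z := by
  rw [div_mul_eq_mul_div, ← exp_add]
  ring_nf

theorem ramanujan_from_li_bound_general (a z : ℝ) (hz : 1 < z)
    (hπ : ∀ y ∈ Set.Icc (Real.exp (z - 1)) (Real.exp z),
      |primePi y - li y| < a * Real.sqrt y * Real.log y)
    (hfg : 0 < Real.exp (z + 1) / z * li (Real.exp (z - 1)) -
        a * (z - 1) / z * Real.exp ((3 * z + 1) / 2) -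
        (li (Real.exp z) + a * z * Real.exp (z / 2)) ^ 2) :
    primePi (Real.exp z) ^ 2 < Real.exp (z + 1) / z * primePi (Real.exp (z - 1)) := by
  have hexp : exp (z - 1) ≤ exp z := exp_le_exp.mpr (by linarith)
  have hupper := (abs_sub_lt_iff.mp
    (abs_primePi_exp_sub_li_lt (hπ (exp z) ⟨hexp, le_rfl⟩))).1
  have hlower := (abs_sub_lt_iff.mp
    (abs_primePi_exp_sub_li_lt (hπ (exp (z - 1)) ⟨le_rfl, hexp⟩))).2
  refine sq_lt_mul_of_lt_of_sub_lt (primePi_nonneg _)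
    (by linarith : _ < li (exp z) + a * z * exp (z / 2))
    (by linarith : li (exp (z - 1)) - a * ((z - 1) * exp ((z - 1) / 2)) < _)
    (div_pos (exp_pos _) (by linarith)) ?_
  have herr : exp (z + 1) / z * (a * ((z - 1) * exp ((z - 1) / 2))) =
      a * (z - 1) / z * exp ((3 * z + 1) / 2) := by
    rw [mul_left_comm, mul_left_comm _ (z - 1), exp_div_mul_exp_half]
    ring
  rw [mul_sub, herr]
  linarith

/-- If `|π(y) − li(y)| < a√y log y` on `[e^{z−1}, e^z]` with `a > 0`, `z > 1`, and
`(e^{z+1}/z)·li(e^{z−1}) − (a(z−1)/z)·e^{(3z+1)/2} − (li(e^z) + a z e^{z/2})² > 0`,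
then Ramanujan's inequality `π(e^z)² < (e^{z+1}/z)·π(e^{z−1})` holds. -/
theorem ramanujan_from_li_bound (a z : ℝ) (ha : 0 < a) (hz : 1 < z)
    (hπ : ∀ y ∈ Set.Icc (Real.exp (z - 1)) (Real.exp z),
      |primePi y - li y| < a * Real.sqrt y * Real.log y)
    (hfg : 0 < Real.exp (z + 1) / z * li (Real.exp (z - 1)) -
        a * (z - 1) / z * Real.exp ((3 * z + 1) / 2) -
        (li (Real.exp z) + a * z * Real.exp (z / 2)) ^ 2) :
    primePi (Real.exp z) ^ 2 < Real.exp (z + 1) / z * primePi (Real.exp (z - 1)) :=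
  ramanujan_from_li_bound_general a z hz hπ hfg
end

section
/- Assume for all t ∈ [5000, x] that |ψ(t) − t| ≤ (√t/(8π))·log t·(log t − 2.42). Then |Π(x) − li(x)| ≤ (√x/(8π))(log x − 2.42) + C₁ + √x/(4π) − √5000/(4π), where C₁ = |Π(5000) − li(5000) − (ψ(5000) − 5000)/log 5000|, and this is < (√x/(8π))·log x provided C₁ < √5000/(4π). -/
open scoped Classical

namespace PiLiAux

open Set MeasureTheory Filter intervalIntegral

/-! ### The integrand `1/log` -/

noncomputable def g : ℝ → ℝ := fun t => 1 / Real.log t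

lemma g_meas : Measurable g := by
  unfold g
  simp only [one_div]
  exact Real.measurable_log.inv

lemma g_int_lt_one {p q : ℝ} (hp0 : 0 ≤ p) (hp1 : p < 1) (hq0 : 0 ≤ q) (hq1 : q < 1) :
    IntervalIntegrable g volume p q := by
  wlog h : p ≤ q generalizing p q
  · exact (this hq0 hq1 hp0 hp1 (le_of_not_ge h)).symm
  rcases eq_or_lt_of_le hq0 with hq | hq
  · have hpq : p = q := le_antisymm h (hq ▸ hp0)
    rw [hpq]
  rw [intervalIntegrable_iff_integrableOn_Ioc_of_le h]
  refine Measure.integrableOn_of_bounded (M := 1 / (-Real.log q)) measure_Ioc_lt_top.ne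
    g_meas.aestronglyMeasurable ?_
  refine (ae_restrict_iff' measurableSet_Ioc).mpr (ae_of_all _ fun t ht => ?_)
  have ht0 : 0 < t := lt_of_le_of_lt hp0 ht.1
  have h1 : Real.log t ≤ Real.log q := Real.log_le_log ht0 ht.2
  have h2 : Real.log q < 0 := Real.log_neg hq hq1
  have h3 : Real.log t < 0 := lt_of_le_of_lt h1 h2
  rw [Real.norm_eq_abs, g, abs_div, abs_one, abs_of_neg h3]
  exact one_div_le_one_div_of_le (by linarith) (by linarith)

lemma g_cont_gt_one {s : Set ℝ} (hs : s ⊆ Set.Ioi 1) : ContinuousOn g s := by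
  refine ContinuousOn.div continuousOn_const
    (Real.continuousOn_log.mono fun t ht => ?_) fun t ht => ne_of_gt (Real.log_pos (hs ht))
  simpa using ne_of_gt (zero_lt_one.trans (hs ht))

lemma g_int_gt_one {p q : ℝ} (hp : 1 < p) (hq : 1 < q) : IntervalIntegrable g volume p q := by
  refine (g_cont_gt_one fun t ht => ?_).intervalIntegrable
  exact lt_of_lt_of_le (lt_min hp hq) ht.1

lemma h_bound {u : ℝ} (hu0 : 0 < u) (hu1 : u < 1) :
    0 ≤ g (1 - u) + g (1 + u) ∧ g (1 - u) + g (1 + u) ≤ 2 := by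
  have h1u : (0:ℝ) < 1 - u := by linarith
  have h1u' : (0:ℝ) < 1 + u := by linarith
  have lA : Real.log (1 + u) ≤ u := by
    have := Real.log_le_sub_one_of_pos h1u'; linarith
  have lA' : u / (1 + u) ≤ Real.log (1 + u) := by
    have h := Real.log_le_sub_one_of_pos (inv_pos.mpr h1u')
    rw [Real.log_inv] at h
    have e : (1 + u)⁻¹ - 1 = -(u / (1 + u)) := by field_simp; ring
    rw [e] at h; linarith
  have lB : Real.log (1 - u) ≤ -u := by
    have := Real.log_le_sub_one_of_pos h1u; linarith
  have lB' : -(u / (1 - u)) ≤ Real.log (1 - u) := by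
    have h := Real.log_le_sub_one_of_pos (inv_pos.mpr h1u)
    rw [Real.log_inv] at h
    have e : (1 - u)⁻¹ - 1 = u / (1 - u) := by field_simp; ring
    rw [e] at h; linarith
  have hA0 : 0 < Real.log (1 + u) := Real.log_pos (by linarith)
  have hB0 : Real.log (1 - u) < 0 := Real.log_neg h1u (by linarith)
  simp only [g]
  constructor
  · have i1 : 1 / u ≤ 1 / Real.log (1 + u) := one_div_le_one_div_of_le hA0 lA
    have i2 : 1 / (-u) ≤ 1 / Real.log (1 - u) :=
      one_div_le_one_div_of_neg_of_le (by linarith) lB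
    have e : (1:ℝ) / (-u) = -(1/u) := by rw [div_neg]
    rw [e] at i2
    linarith
  · have j1 : 1 / Real.log (1 + u) ≤ 1 / (u / (1 + u)) :=
      one_div_le_one_div_of_le (by positivity) lA'
    have j2 : 1 / Real.log (1 - u) ≤ 1 / (-(u / (1 - u))) :=
      one_div_le_one_div_of_neg_of_le hB0 lB'
    have e1 : 1 / (u / (1 + u)) = (1 + u) / u := one_div_div _ _
    have e2 : (1:ℝ) / (-(u / (1 - u))) = -((1 - u) / u) := by
      rw [div_neg, one_div_div]
    rw [e1] at j1; rw [e2] at j2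
    have e3 : (1 + u) / u - (1 - u) / u = 2 := by
      field_simp
      ring
    linarith

/-! ### The truncated `li` integrals -/

noncomputable def F (b : ℝ) : ℝ → ℝ := fun ε =>
  (∫ t in (0:ℝ)..(1 - ε), 1 / Real.log t) + ∫ t in (1 + ε : ℝ)..b, 1 / Real.log t

lemma li_eq_limUnder (b : ℝ) : li b = limUnder (nhdsWithin 0 (Set.Ioi 0)) (F b) := rfl

lemma gF (b : ℝ) (ε : ℝ) :
    F b ε = (∫ t in (0:ℝ)..(1 - ε), g t) + ∫ t in (1 + ε : ℝ)..b, g t := rfl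

lemma F_sub (b : ℝ) (hb : 2 ≤ b) {δ ε : ℝ} (hδ : 0 < δ) (hδε : δ ≤ ε) (hε : ε < 1/2) :
    F b δ - F b ε = ∫ u in δ..ε, (g (1 - u) + g (1 + u)) := by
  have hε1 : ε < 1 := by linarith
  have i1 : IntervalIntegrable g volume 0 (1 - ε) :=
    g_int_lt_one le_rfl one_pos (by linarith) (by linarith)
  have i2 : IntervalIntegrable g volume (1 - ε) (1 - δ) :=
    g_int_lt_one (by linarith) (by linarith) (by linarith) (by linarith)
  have i3 : IntervalIntegrable g volume (1 + δ) (1 + ε) :=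
    g_int_gt_one (by linarith) (by linarith)
  have i4 : IntervalIntegrable g volume (1 + ε) b :=
    g_int_gt_one (by linarith) (by linarith)
  have e1 : (∫ t in (0:ℝ)..(1 - ε), g t) + ∫ t in (1 - ε)..(1 - δ), g t
      = ∫ t in (0:ℝ)..(1 - δ), g t := integral_add_adjacent_intervals i1 i2
  have e2 : (∫ t in (1 + δ)..(1 + ε), g t) + ∫ t in (1 + ε)..b, g t
      = ∫ t in (1 + δ)..b, g t := integral_add_adjacent_intervals i3 i4
  have c1 : (∫ u in δ..ε, g (1 - u)) = ∫ t in (1 - ε)..(1 - δ), g t := by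
    simpa using integral_comp_sub_left (a := δ) (b := ε) (f := g) (d := 1)
  have c2 : (∫ u in δ..ε, g (1 + u)) = ∫ t in (1 + δ)..(1 + ε), g t := by
    simpa using integral_comp_add_left (a := δ) (b := ε) (f := g) (d := 1)
  have j1 : IntervalIntegrable (fun u => g (1 - u)) volume δ ε := by
    have := i2.comp_sub_left 1
    simpa using this.symm
  have j2 : IntervalIntegrable (fun u => g (1 + u)) volume δ ε := by
    have := i3.comp_add_left 1
    simpa using this
  rw [integral_add j1 j2, c1, c2, gF, gF]
  linarith

lemma h_int {δ ε : ℝ} (hδ : 0 < δ) (hδε : δ ≤ ε) (hε : ε < 1/2) :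
    IntervalIntegrable (fun u => g (1 - u) + g (1 + u)) volume δ ε := by
  have i2 : IntervalIntegrable g volume (1 - ε) (1 - δ) :=
    g_int_lt_one (by linarith) (by linarith) (by linarith) (by linarith)
  have i3 : IntervalIntegrable g volume (1 + δ) (1 + ε) :=
    g_int_gt_one (by linarith) (by linarith)
  have j1 : IntervalIntegrable (fun u => g (1 - u)) volume δ ε := by
    have := i2.comp_sub_left 1
    simpa using this.symm
  have j2 : IntervalIntegrable (fun u => g (1 + u)) volume δ ε := by
    have := i3.comp_add_left 1
    simpa using this
  exact j1.add j2

lemma F_mono (b : ℝ) (hb : 2 ≤ b) : AntitoneOn (F b) (Set.Ioo 0 (1/2)) := by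
  intro δ hδ ε hε hδε
  have hsub := F_sub b hb hδ.1 hδε hε.2
  have hnn : 0 ≤ ∫ u in δ..ε, (g (1 - u) + g (1 + u)) :=
    intervalIntegral.integral_nonneg hδε fun u hu =>
      (h_bound (lt_of_lt_of_le hδ.1 hu.1) (lt_of_le_of_lt hu.2 (by linarith [hε.2]))).1
  linarith

lemma F_bdd (b : ℝ) (hb : 2 ≤ b) : BddAbove (F b '' Set.Ioo 0 (1/2)) := by
  refine ⟨F b (1/4) + 1, ?_⟩
  rintro y ⟨δ, hδ, rfl⟩
  rcases le_or_gt δ (1/4) with h | h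
  · have hsub := F_sub b hb hδ.1 h (by norm_num)
    have hint := h_int hδ.1 h (by norm_num)
    have hle : (∫ u in δ..(1/4 : ℝ), (g (1 - u) + g (1 + u)))
        ≤ ∫ u in δ..(1/4 : ℝ), (2:ℝ) := by
      refine intervalIntegral.integral_mono_on h hint intervalIntegrable_const fun u hu => ?_
      exact (h_bound (lt_of_lt_of_le hδ.1 hu.1) (lt_of_le_of_lt hu.2 (by norm_num))).2
    rw [intervalIntegral.integral_const, smul_eq_mul] at hle
    have : (1/4 - δ) * 2 ≤ 1 := by nlinarith [hδ.1]
    linarith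
  · have := F_mono b hb (by norm_num : (1/4:ℝ) ∈ Set.Ioo (0:ℝ) (1/2)) hδ h.le
    linarith

lemma F5000_tendsto : ∃ L, Filter.Tendsto (F 5000) (nhdsWithin 0 (Set.Ioi 0)) (nhds L) := by
  have hne : (Set.Ioo (0:ℝ) (1/2)).Nonempty := ⟨1/4, by norm_num⟩
  exact ⟨_, (F_mono 5000 (by norm_num)).tendsto_nhdsWithin_Ioo_right hne
    (F_bdd 5000 (by norm_num))⟩

lemma li_eq (x : ℝ) (hx : 5000 ≤ x) :
    li x = li 5000 + ∫ t in (5000:ℝ)..x, 1 / Real.log t := by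
  obtain ⟨L, hL⟩ := F5000_tendsto
  have h5 : li 5000 = L := hL.limUnder_eq
  have heq : ∀ᶠ ε in nhdsWithin (0:ℝ) (Set.Ioi 0),
      F 5000 ε + (∫ t in (5000:ℝ)..x, 1 / Real.log t) = F x ε := by
    filter_upwards [Ioo_mem_nhdsGT_of_mem
      (by norm_num : (0:ℝ) ∈ Set.Ico (0:ℝ) 1)] with ε hε
    have i1 : IntervalIntegrable g volume (1 + ε) 5000 :=
      g_int_gt_one (by linarith [hε.1]) (by norm_num)
    have i2 : IntervalIntegrable g volume 5000 x :=
      g_int_gt_one (by norm_num) (by linarith)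
    have e := integral_add_adjacent_intervals i1 i2
    rw [gF, gF]
    have hg : (∫ t in (5000:ℝ)..x, 1 / Real.log t) = ∫ t in (5000:ℝ)..x, g t := rfl
    rw [hg]
    linarith
  have hT : Filter.Tendsto (F x) (nhdsWithin 0 (Set.Ioi 0))
      (nhds (L + ∫ t in (5000:ℝ)..x, 1 / Real.log t)) :=
    Filter.Tendsto.congr' heq (hL.add_const _)
  rw [li_eq_limUnder, hT.limUnder_eq, h5]

/-! ### Derivatives and FTC lemmas -/

lemma hasDeriv_invlog {t : ℝ} (ht : 1 < t) :
    HasDerivAt (fun s : ℝ => (Real.log s)⁻¹) (-t⁻¹ / Real.log t ^ 2) t :=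
  (Real.hasDerivAt_log (by linarith)).inv (ne_of_gt (Real.log_pos ht))

lemma contOn_invlog {a b : ℝ} (ha : 1 < a) :
    ContinuousOn (fun t : ℝ => (Real.log t)⁻¹) (Set.Icc a b) := by
  refine ContinuousOn.inv₀ (Real.continuousOn_log.mono fun t ht => ?_)
    fun t ht => ne_of_gt (Real.log_pos (lt_of_lt_of_le ha ht.1))
  simpa using ne_of_gt (lt_trans zero_lt_one (lt_of_lt_of_le ha ht.1))

lemma ftc_tlog {a x : ℝ} (ha : 1 < a) (hax : a ≤ x) :
    (∫ t in a..x, ((Real.log t)⁻¹ - (Real.log t ^ 2)⁻¹))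
      = x * (Real.log x)⁻¹ - a * (Real.log a)⁻¹ := by
  refine intervalIntegral.integral_eq_sub_of_hasDerivAt
    (f := fun t : ℝ => t * (Real.log t)⁻¹)
    (f' := fun t : ℝ => (Real.log t)⁻¹ - (Real.log t ^ 2)⁻¹) (fun t ht => ?_) ?_
  · rw [Set.uIcc_of_le hax] at ht
    have ht1 : 1 < t := lt_of_lt_of_le ha ht.1
    have hl : Real.log t ≠ 0 := ne_of_gt (Real.log_pos ht1)
    have ht0 : t ≠ 0 := by intro h; rw [h] at ht1; norm_num at ht1
    have h1 := (hasDerivAt_id t).mul (hasDeriv_invlog ht1)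
    refine HasDerivAt.congr_deriv h1 ?_
    have e : t * (-t⁻¹ / Real.log t ^ 2) = -(Real.log t ^ 2)⁻¹ := by
      rw [show t * (-t⁻¹ / Real.log t ^ 2) = -(t * t⁻¹) / Real.log t ^ 2 from by ring,
        mul_inv_cancel₀ ht0, neg_div, one_div]
    simp only [id_eq, one_mul]
    rw [e]
    ring
  · refine ContinuousOn.intervalIntegrable ?_
    rw [Set.uIcc_of_le hax]
    have hlog : ContinuousOn Real.log (Set.Icc a x) := by
      refine Real.continuousOn_log.mono fun t ht => ?_
      simpa using ne_of_gt (lt_trans zero_lt_one (lt_of_lt_of_le ha ht.1))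
    exact (contOn_invlog ha).sub ((hlog.pow 2).inv₀ fun t ht =>
      pow_ne_zero 2 (ne_of_gt (Real.log_pos (lt_of_lt_of_le ha ht.1))))

lemma ftc_sqrt {a x : ℝ} (ha : 0 < a) (hax : a ≤ x) :
    (∫ t in a..x, (Real.sqrt t)⁻¹) = 2 * Real.sqrt x - 2 * Real.sqrt a := by
  refine intervalIntegral.integral_eq_sub_of_hasDerivAt
    (f := fun t : ℝ => 2 * Real.sqrt t)
    (f' := fun t : ℝ => (Real.sqrt t)⁻¹) (fun t ht => ?_) ?_
  · rw [Set.uIcc_of_le hax] at ht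
    have ht0 : 0 < t := lt_of_lt_of_le ha ht.1
    have hs : Real.sqrt t ≠ 0 := ne_of_gt (Real.sqrt_pos.mpr ht0)
    have h1 := (Real.hasDerivAt_sqrt (ne_of_gt ht0)).const_mul (2:ℝ)
    refine HasDerivAt.congr_deriv h1 ?_
    field_simp
  · refine ContinuousOn.intervalIntegrable ?_
    refine ContinuousOn.inv₀ (Real.continuous_sqrt.continuousOn) fun t ht => ?_
    rw [Set.uIcc_of_le hax] at ht
    exact ne_of_gt (Real.sqrt_pos.mpr (lt_of_lt_of_le ha ht.1))

/-! ### Partial-summation side -/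

noncomputable def S (t : ℝ) : ℝ :=
  ∑ k ∈ Finset.Icc 0 ⌊t⌋₊, (ArithmeticFunction.vonMangoldt k : ℝ)

noncomputable def P (t : ℝ) : ℝ :=
  ∑ k ∈ Finset.Icc 0 ⌊t⌋₊, ((ArithmeticFunction.vonMangoldt k : ℝ) / Real.log k)

lemma S_apply (t : ℝ) :
    S t = ∑ k ∈ Finset.Icc 0 ⌊t⌋₊, (ArithmeticFunction.vonMangoldt k : ℝ) := rfl

lemma P_apply (t : ℝ) :
    P t = ∑ k ∈ Finset.Icc 0 ⌊t⌋₊,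
      ((ArithmeticFunction.vonMangoldt k : ℝ) / Real.log k) := rfl

lemma range_succ_eq_Icc (n : ℕ) : Finset.range (n + 1) = Finset.Icc 0 n := by
  rw [← Finset.Ico_add_one_right_eq_Icc, Nat.Ico_zero_eq_range]

lemma S_meas : Measurable S := by
  have h : Measurable fun n : ℕ => ∑ k ∈ Finset.Icc 0 n,
      (ArithmeticFunction.vonMangoldt k : ℝ) := measurable_from_top
  exact h.comp Nat.measurable_floor

lemma S_nonneg (t : ℝ) : 0 ≤ S t :=
  Finset.sum_nonneg fun k _ => ArithmeticFunction.vonMangoldt_nonneg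

lemma S_mono {t u : ℝ} (h : t ≤ u) : S t ≤ S u :=
  Finset.sum_le_sum_of_subset_of_nonneg
    (Finset.Icc_subset_Icc le_rfl (Nat.floor_le_floor h))
    fun k _ _ => ArithmeticFunction.vonMangoldt_nonneg

lemma floor5000 : ⌊(5000:ℝ)⌋₊ = 5000 := by
  rw [show ((5000:ℝ)) = ((5000:ℕ):ℝ) by norm_num, Nat.floor_natCast]

lemma norm_eq (y : ℝ) (hy : 1 < y) :
    riemannPi y - chebPsi y / Real.log y = P y - S y / Real.log y := by
  have hy0 : (0:ℝ) ≤ y := by linarith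
  have hlog : Real.log y ≠ 0 := ne_of_gt (Real.log_pos hy)
  rw [riemannPi, chebPsi, P_apply, S_apply, ← range_succ_eq_Icc, Finset.sum_div,
    Finset.sum_div, ← Finset.sum_sub_distrib, ← Finset.sum_sub_distrib]
  refine Finset.sum_congr rfl fun n hn => ?_
  have hn' : (n:ℝ) ≤ y := by
    have h1 : n ≤ ⌊y⌋₊ := Nat.lt_succ_iff.mp (Finset.mem_range.mp hn)
    exact le_trans (Nat.cast_le.mpr h1) (Nat.floor_le hy0)
  by_cases h : (n:ℝ) = y
  · have hlogn : Real.log n = Real.log y := by rw [h]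
    simp only [if_pos h, hlogn]
    field_simp
    ring
  · simp only [if_neg h, if_pos hn']

lemma abel_identity (x : ℝ) (hx : 5000 ≤ x) :
    P x - P 5000 = (Real.log x)⁻¹ * S x - (Real.log 5000)⁻¹ * S 5000
      - ∫ t in Set.Ioc (5000:ℝ) x, deriv (fun s : ℝ => (Real.log s)⁻¹) t * S t := by
  have hdiff : ∀ t ∈ Set.Icc (5000:ℝ) x, DifferentiableAt ℝ (fun s : ℝ => (Real.log s)⁻¹) t :=
    fun t ht => (hasDeriv_invlog (by linarith [ht.1])).differentiableAt
  have hcont : ContinuousOn (fun t : ℝ => -t⁻¹ / Real.log t ^ 2) (Set.Icc (5000:ℝ) x) := by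
    have hlog : ContinuousOn Real.log (Set.Icc (5000:ℝ) x) := by
      refine Real.continuousOn_log.mono fun t ht => ?_
      simpa using (by linarith [ht.1] : t ≠ 0)
    refine ContinuousOn.div ?_ (hlog.pow 2) fun t ht =>
      pow_ne_zero 2 (ne_of_gt (Real.log_pos (by linarith [ht.1])))
    exact (continuousOn_id.inv₀ fun t ht => by
      simp only [id_eq]
      exact ne_of_gt (by linarith [ht.1])).neg
  have hEq : Set.EqOn (fun t : ℝ => -t⁻¹ / Real.log t ^ 2)
      (deriv fun s : ℝ => (Real.log s)⁻¹) (Set.Icc (5000:ℝ) x) :=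
    fun t ht => ((hasDeriv_invlog (by linarith [ht.1])).deriv).symm
  have hint : IntegrableOn (deriv fun s : ℝ => (Real.log s)⁻¹) (Set.Icc (5000:ℝ) x) :=
    (hcont.integrableOn_Icc).congr_fun hEq measurableSet_Icc
  have key := sum_mul_eq_sub_sub_integral_mul
    (c := fun n => (ArithmeticFunction.vonMangoldt n : ℝ))
    (f := fun s : ℝ => (Real.log s)⁻¹) (a := 5000) (b := x)
    (by norm_num) hx hdiff hint
  rw [floor5000] at key
  have hfl : 5000 ≤ ⌊x⌋₊ := by
    rw [← floor5000]; exact Nat.floor_le_floor hx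
  have hdisj : Disjoint (Finset.Icc 0 5000) (Finset.Ioc 5000 ⌊x⌋₊) := by
    rw [Finset.disjoint_left]
    intro k hk1 hk2
    simp only [Finset.mem_Icc, Finset.mem_Ioc] at hk1 hk2
    omega
  have hsets : Finset.Icc 0 ⌊x⌋₊ = Finset.Icc 0 5000 ∪ Finset.Ioc 5000 ⌊x⌋₊ := by
    ext k
    simp only [Finset.mem_union, Finset.mem_Icc, Finset.mem_Ioc]
    omega
  have hsplit : P x = P 5000 + ∑ k ∈ Finset.Ioc 5000 ⌊x⌋₊,
      ((ArithmeticFunction.vonMangoldt k : ℝ) / Real.log k) := by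
    rw [P_apply, P_apply, floor5000, hsets, Finset.sum_union hdisj]
  have hterm : ∑ k ∈ Finset.Ioc 5000 ⌊x⌋₊,
      ((fun s : ℝ => (Real.log s)⁻¹) k * (ArithmeticFunction.vonMangoldt k : ℝ))
      = ∑ k ∈ Finset.Ioc 5000 ⌊x⌋₊,
        ((ArithmeticFunction.vonMangoldt k : ℝ) / Real.log k) :=
    Finset.sum_congr rfl fun k _ => by
      rw [div_eq_mul_inv, mul_comm]
  rw [hterm] at key
  rw [hsplit, key]
  simp only [S_apply, floor5000]
  ring

lemma inv_tlog_cont {x : ℝ} (hx : 5000 ≤ x) :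
    ContinuousOn (fun t : ℝ => (t * Real.log t ^ 2)⁻¹) (Set.Icc (5000:ℝ) x) := by
  have hlog : ContinuousOn Real.log (Set.Icc (5000:ℝ) x) := by
    refine Real.continuousOn_log.mono fun t ht => ?_
    simpa using (by linarith [ht.1] : t ≠ 0)
  refine ContinuousOn.inv₀ (continuousOn_id.mul (hlog.pow 2)) fun t ht => ?_
  have h1 : (0:ℝ) < t := by linarith [ht.1]
  have h2 : 0 < Real.log t := Real.log_pos (by linarith [ht.1])
  positivity

lemma hI1 (x : ℝ) (hx : 5000 ≤ x) :
    IntegrableOn (fun t : ℝ => (t * Real.log t ^ 2)⁻¹ * S t) (Set.Ioc (5000:ℝ) x) := by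
  have hl5 : (0:ℝ) < Real.log 5000 := Real.log_pos (by norm_num)
  refine Measure.integrableOn_of_bounded
    (M := (5000 * Real.log 5000 ^ 2)⁻¹ * S x) measure_Ioc_lt_top.ne
    (((measurable_id.mul (Real.measurable_log.pow_const 2)).inv.mul S_meas).aestronglyMeasurable)
    ?_
  refine (ae_restrict_iff' measurableSet_Ioc).mpr (ae_of_all _ fun t ht => ?_)
  have ht0 : (0:ℝ) < t := by linarith [ht.1]
  have hlt : Real.log 5000 ≤ Real.log t := Real.log_le_log (by norm_num) ht.1.le
  have hl0 : 0 < Real.log t := lt_of_lt_of_le hl5 hlt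
  have hsq : Real.log 5000 ^ 2 ≤ Real.log t ^ 2 := by nlinarith
  have hprod : 5000 * Real.log 5000 ^ 2 ≤ t * Real.log t ^ 2 :=
    mul_le_mul ht.1.le hsq (by positivity) ht0.le
  have hpos : (0:ℝ) < 5000 * Real.log 5000 ^ 2 := by positivity
  have hinv : (t * Real.log t ^ 2)⁻¹ ≤ (5000 * Real.log 5000 ^ 2)⁻¹ :=
    inv_anti₀ hpos hprod
  have hS : S t ≤ S x := S_mono ht.2
  rw [Real.norm_eq_abs, abs_mul, abs_of_pos (inv_pos.mpr (lt_of_lt_of_le hpos hprod)),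
    abs_of_nonneg (S_nonneg t)]
  exact mul_le_mul hinv hS (S_nonneg t) (inv_pos.mpr hpos).le

lemma hI2 (x : ℝ) (hx : 5000 ≤ x) :
    IntegrableOn (fun t : ℝ => (t * Real.log t ^ 2)⁻¹ * t) (Set.Ioc (5000:ℝ) x) :=
  (((inv_tlog_cont hx).mul continuousOn_id).integrableOn_Icc).mono_set Set.Ioc_subset_Icc_self

lemma main_identity (x : ℝ) (hx : 5000 ≤ x) :
    (P x - S x / Real.log x + x / Real.log x - li x)
      - (P 5000 - S 5000 / Real.log 5000 + 5000 / Real.log 5000 - li 5000)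
    = ∫ t in Set.Ioc (5000:ℝ) x, (t * Real.log t ^ 2)⁻¹ * (S t - t) := by
  have habel := abel_identity x hx
  have hli := li_eq x hx
  have hftc := ftc_tlog (by norm_num : (1:ℝ) < 5000) hx
  have hc1 : IntervalIntegrable (fun t : ℝ => (Real.log t)⁻¹) volume 5000 x := by
    refine ContinuousOn.intervalIntegrable ?_
    rw [Set.uIcc_of_le hx]
    exact contOn_invlog (by norm_num)
  have hc2 : IntervalIntegrable (fun t : ℝ => (Real.log t ^ 2)⁻¹) volume 5000 x := by
    refine ContinuousOn.intervalIntegrable ?_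
    rw [Set.uIcc_of_le hx]
    have hlog : ContinuousOn Real.log (Set.Icc (5000:ℝ) x) := by
      refine Real.continuousOn_log.mono fun t ht => ?_
      simpa using (by linarith [ht.1] : t ≠ 0)
    exact (hlog.pow 2).inv₀ fun t ht =>
      pow_ne_zero 2 (ne_of_gt (Real.log_pos (by linarith [ht.1])))
  have hsplit : (∫ t in (5000:ℝ)..x, ((Real.log t)⁻¹ - (Real.log t ^ 2)⁻¹))
      = (∫ t in (5000:ℝ)..x, (Real.log t)⁻¹) - ∫ t in (5000:ℝ)..x, (Real.log t ^ 2)⁻¹ :=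
    intervalIntegral.integral_sub hc1 hc2
  have he1 : (∫ t in (5000:ℝ)..x, (Real.log t)⁻¹) = ∫ t in (5000:ℝ)..x, 1 / Real.log t := by
    simp [one_div]
  have he2 : (∫ t in (5000:ℝ)..x, (Real.log t ^ 2)⁻¹)
      = ∫ t in Set.Ioc (5000:ℝ) x, (t * Real.log t ^ 2)⁻¹ * t := by
    rw [intervalIntegral.integral_of_le hx]
    refine setIntegral_congr_fun measurableSet_Ioc fun t ht => ?_
    have ht0 : t ≠ 0 := by have := ht.1; positivity
    have hl : Real.log t ≠ 0 := ne_of_gt (Real.log_pos (by linarith [ht.1]))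
    field_simp
  have he3 : (∫ t in Set.Ioc (5000:ℝ) x, deriv (fun s : ℝ => (Real.log s)⁻¹) t * S t)
      = - ∫ t in Set.Ioc (5000:ℝ) x, (t * Real.log t ^ 2)⁻¹ * S t := by
    rw [← MeasureTheory.integral_neg]
    refine setIntegral_congr_fun measurableSet_Ioc fun t ht => ?_
    have ht1 : (1:ℝ) < t := by linarith [ht.1]
    have ht0 : t ≠ 0 := by linarith [ht.1]
    have hl : Real.log t ≠ 0 := ne_of_gt (Real.log_pos ht1)
    rw [(hasDeriv_invlog ht1).deriv]
    field_simp
  have he4 : (∫ t in Set.Ioc (5000:ℝ) x, (t * Real.log t ^ 2)⁻¹ * (S t - t))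
      = (∫ t in Set.Ioc (5000:ℝ) x, (t * Real.log t ^ 2)⁻¹ * S t)
        - ∫ t in Set.Ioc (5000:ℝ) x, (t * Real.log t ^ 2)⁻¹ * t := by
    rw [← MeasureTheory.integral_sub (hI1 x hx) (hI2 x hx)]
    refine setIntegral_congr_fun measurableSet_Ioc fun t ht => ?_
    ring
  have hd1 : S x / Real.log x = (Real.log x)⁻¹ * S x := div_eq_inv_mul _ _
  have hd2 : S 5000 / Real.log 5000 = (Real.log 5000)⁻¹ * S 5000 := div_eq_inv_mul _ _
  have hd3 : x / Real.log x = x * (Real.log x)⁻¹ := div_eq_mul_inv _ _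
  have hd4 : (5000:ℝ) / Real.log 5000 = 5000 * (Real.log 5000)⁻¹ := div_eq_mul_inv _ _
  rw [he3] at habel
  rw [he1] at hsplit
  linarith [hsplit, he2, he4]

lemma chebPsi_eq_S {t : ℝ} (ht0 : 0 ≤ t) (htn : t ∉ Set.range (Nat.cast : ℕ → ℝ)) :
    chebPsi t = S t := by
  rw [chebPsi, S_apply, ← range_succ_eq_Icc]
  refine Finset.sum_congr rfl fun n hn => ?_
  have hne : (n:ℝ) ≠ t := fun h => htn ⟨n, h⟩
  have hn' : (n:ℝ) ≤ t := by
    have h1 : n ≤ ⌊t⌋₊ := Nat.lt_succ_iff.mp (Finset.mem_range.mp hn)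
    exact le_trans (Nat.cast_le.mpr h1) (Nat.floor_le ht0)
  rw [if_neg hne, if_pos hn']

lemma err_bound (x : ℝ) (hx : 5000 ≤ x)
    (hψ : ∀ t ∈ Set.Icc (5000 : ℝ) x,
      |chebPsi t - t| ≤ Real.sqrt t / (8 * Real.pi) * Real.log t * (Real.log t - 2.42)) :
    |∫ t in Set.Ioc (5000:ℝ) x, (t * Real.log t ^ 2)⁻¹ * (S t - t)|
      ≤ Real.sqrt x / (4 * Real.pi) - Real.sqrt 5000 / (4 * Real.pi) := by
  have hπ : (0:ℝ) < Real.pi := Real.pi_pos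
  have hbint : IntegrableOn (fun t : ℝ => (Real.sqrt t)⁻¹ / (8 * Real.pi))
      (Set.Ioc (5000:ℝ) x) := by
    refine (ContinuousOn.integrableOn_Icc ?_).mono_set Set.Ioc_subset_Icc_self
    refine ContinuousOn.div ?_ continuousOn_const (fun t _ => by positivity)
    refine ContinuousOn.inv₀ Real.continuous_sqrt.continuousOn fun t ht => ?_
    exact ne_of_gt (Real.sqrt_pos.mpr (by linarith [ht.1]))
  have hae : ∀ᵐ t ∂(volume.restrict (Set.Ioc (5000:ℝ) x)),
      ‖(t * Real.log t ^ 2)⁻¹ * (S t - t)‖ ≤ (Real.sqrt t)⁻¹ / (8 * Real.pi) := by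
    rw [ae_restrict_iff' measurableSet_Ioc]
    have hnull : ∀ᵐ t : ℝ, t ∉ Set.range (Nat.cast : ℕ → ℝ) :=
      (measure_eq_zero_iff_ae_notMem.mp ((Set.countable_range _).measure_zero _))
    filter_upwards [hnull] with t htn ht
    have ht0 : (0:ℝ) < t := by linarith [ht.1]
    have ht1 : (1:ℝ) < t := by linarith [ht.1]
    have hL : 0 < Real.log t := Real.log_pos ht1
    have hs : 0 < Real.sqrt t := Real.sqrt_pos.mpr ht0
    have hss : Real.sqrt t * Real.sqrt t = t := Real.mul_self_sqrt ht0.le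
    have hSc : S t - t = chebPsi t - t := by rw [chebPsi_eq_S ht0.le htn]
    have hb := hψ t ⟨ht.1.le, ht.2⟩
    rw [← hSc] at hb
    have hinv : (0:ℝ) < (t * Real.log t ^ 2)⁻¹ := by positivity
    rw [Real.norm_eq_abs, abs_mul, abs_of_pos hinv]
    calc (t * Real.log t ^ 2)⁻¹ * |S t - t|
        ≤ (t * Real.log t ^ 2)⁻¹ *
          (Real.sqrt t / (8 * Real.pi) * Real.log t * (Real.log t - 2.42)) :=
          mul_le_mul_of_nonneg_left hb hinv.le
      _ ≤ (t * Real.log t ^ 2)⁻¹ *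
          (Real.sqrt t / (8 * Real.pi) * Real.log t * Real.log t) := by
          refine mul_le_mul_of_nonneg_left ?_ hinv.le
          have h1 : 0 ≤ Real.sqrt t / (8 * Real.pi) * Real.log t := by positivity
          nlinarith
      _ = (Real.sqrt t)⁻¹ / (8 * Real.pi) := by
          have h8 : (8:ℝ) * Real.pi ≠ 0 := by positivity
          field_simp
          linear_combination hss
  have hkey : ‖∫ t in Set.Ioc (5000:ℝ) x, (t * Real.log t ^ 2)⁻¹ * (S t - t)‖
      ≤ ∫ t in Set.Ioc (5000:ℝ) x, (Real.sqrt t)⁻¹ / (8 * Real.pi) :=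
    MeasureTheory.norm_integral_le_of_norm_le hbint hae
  have hval : (∫ t in Set.Ioc (5000:ℝ) x, (Real.sqrt t)⁻¹ / (8 * Real.pi))
      = Real.sqrt x / (4 * Real.pi) - Real.sqrt 5000 / (4 * Real.pi) := by
    rw [← intervalIntegral.integral_of_le hx, intervalIntegral.integral_div,
      ftc_sqrt (by norm_num) hx]
    field_simp
    ring
  rw [← Real.norm_eq_abs]
  rw [hval] at hkey
  exact hkey

end PiLiAux


/-- If `|ψ(t) − t| ≤ (√t/(8π)) log t (log t − 2.42)` for all `t ∈ [5000, x]`, then with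
`C₁ = |Π(5000) − li(5000) − (ψ(5000) − 5000)/log 5000|`,
`|Π(x) − li(x)| ≤ (√x/(8π))(log x − 2.42) + C₁ + √x/(4π) − √5000/(4π)`, and
moreover `|Π(x) − li(x)| < (√x/(8π)) log x` provided `C₁ < √5000/(4π)`. -/
theorem riemannPi_sub_li_bound (x : ℝ) (hx : 5000 ≤ x)
    (hψ : ∀ t ∈ Set.Icc (5000 : ℝ) x,
      |chebPsi t - t| ≤ Real.sqrt t / (8 * Real.pi) * Real.log t * (Real.log t - 2.42)) :
    |riemannPi x - li x| ≤
        Real.sqrt x / (8 * Real.pi) * (Real.log x - 2.42) +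
          |riemannPi 5000 - li 5000 - (chebPsi 5000 - 5000) / Real.log 5000| +
          Real.sqrt x / (4 * Real.pi) - Real.sqrt 5000 / (4 * Real.pi) ∧
      (|riemannPi 5000 - li 5000 - (chebPsi 5000 - 5000) / Real.log 5000| <
          Real.sqrt 5000 / (4 * Real.pi) →
        |riemannPi x - li x| < Real.sqrt x / (8 * Real.pi) * Real.log x) := by
  have hπ : (0:ℝ) < Real.pi := Real.pi_pos
  have hlx : 0 < Real.log x := Real.log_pos (by linarith)
  have hl5 : (0:ℝ) < Real.log 5000 := Real.log_pos (by norm_num)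
  have hE : ∀ y : ℝ, (1:ℝ) < y →
      riemannPi y - li y - (chebPsi y - y) / Real.log y
        = PiLiAux.P y - PiLiAux.S y / Real.log y + y / Real.log y - li y := by
    intro y hy
    have h := PiLiAux.norm_eq y hy
    rw [sub_div]
    linarith
  have hid := PiLiAux.main_identity x hx
  have herr := PiLiAux.err_bound x hx hψ
  have hE5 := hE 5000 (by norm_num)
  have hEx := hE x (by linarith)
  set Er := ∫ t in Set.Ioc (5000:ℝ) x, (t * Real.log t ^ 2)⁻¹ * (PiLiAux.S t - t) with hEr
  have h1 : |riemannPi x - li x - (chebPsi x - x) / Real.log x|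
      ≤ |riemannPi 5000 - li 5000 - (chebPsi 5000 - 5000) / Real.log 5000|
        + (Real.sqrt x / (4 * Real.pi) - Real.sqrt 5000 / (4 * Real.pi)) := by
    have heq : riemannPi x - li x - (chebPsi x - x) / Real.log x
        = (riemannPi 5000 - li 5000 - (chebPsi 5000 - 5000) / Real.log 5000) + Er := by
      rw [hEx, hE5]; linarith
    rw [heq]
    exact le_trans (abs_add_le _ _) (by linarith [herr])
  have h2 : |(chebPsi x - x) / Real.log x|
      ≤ Real.sqrt x / (8 * Real.pi) * (Real.log x - 2.42) := by
    rw [abs_div, abs_of_pos hlx, div_le_iff₀ hlx]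
    calc |chebPsi x - x| ≤ Real.sqrt x / (8 * Real.pi) * Real.log x * (Real.log x - 2.42) :=
          hψ x ⟨hx, le_rfl⟩
      _ = Real.sqrt x / (8 * Real.pi) * (Real.log x - 2.42) * Real.log x := by ring
  have h3 : |riemannPi x - li x|
      ≤ Real.sqrt x / (8 * Real.pi) * (Real.log x - 2.42)
        + |riemannPi 5000 - li 5000 - (chebPsi 5000 - 5000) / Real.log 5000|
        + Real.sqrt x / (4 * Real.pi) - Real.sqrt 5000 / (4 * Real.pi) := by
    have heq : riemannPi x - li x
        = (riemannPi x - li x - (chebPsi x - x) / Real.log x)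
          + (chebPsi x - x) / Real.log x := by ring
    rw [heq]
    have := abs_add_le (riemannPi x - li x - (chebPsi x - x) / Real.log x)
      ((chebPsi x - x) / Real.log x)
    linarith
  refine ⟨h3, fun hC => ?_⟩
  have hsx : 0 < Real.sqrt x := Real.sqrt_pos.mpr (by linarith)
  have hu : 0 < Real.sqrt x / (8 * Real.pi) := by positivity
  have h4 : Real.sqrt x / (4 * Real.pi) = 2 * (Real.sqrt x / (8 * Real.pi)) := by
    field_simp; ring
  have h5 : Real.sqrt x / (8 * Real.pi) * (Real.log x - 2.42)
      = Real.sqrt x / (8 * Real.pi) * Real.log x - 2.42 * (Real.sqrt x / (8 * Real.pi)) := by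
    ring
  calc |riemannPi x - li x| ≤ _ := h3
    _ < Real.sqrt x / (8 * Real.pi) * Real.log x := by
      linarith [hC, hu, h4, h5]
end
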